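/- arXiv:2410.23761 — 3 statements merged into one kernel-verified Lean document; each statement's English description precedes it below -/
import Mathlib

section
/- Let (M,d) be a complete metric space and S ⊆ M a nonempty subset. Then the collection of nonempty compact subsets of co(S|M) equals co(𝒫_nco(S) | 𝒫_nco(M)), where both hyperspaces carry the Hausdorff metric; i.e., a nonempty compact subset K of M satisfies K ⊆ co(S|M) if and only if K is a limit in the Hausdorff metric of a Cauchy sequence of nonempty compact subsets of S. -/
open Filter Topology TopologicalSpace

/-- `coSet S` is the set of limits in `M` of Cauchy sequences all of whose terms lie in `S`. -/
def coSet {M : Type*} [MetricSpace M] (S : Set M) : Set M :=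
  {x | ∃ u : ℕ → M, (∀ n, u n ∈ S) ∧ CauchySeq u ∧ Tendsto u atTop (𝓝 x)}

theorem coSet_eq_closure {M : Type*} [MetricSpace M] (S : Set M) : coSet S = closure S := by
  ext x
  constructor
  · rintro ⟨u, hu, -, hlim⟩
    exact mem_closure_of_tendsto hlim (Eventually.of_forall hu)
  · intro hx
    rcases mem_closure_iff_seq_limit.1 hx with ⟨u, hu, hlim⟩
    exact ⟨u, hu, hlim.cauchySeq, hlim⟩

/-- `𝒫_nco(co(S|M)) = co(𝒫_nco(S) | 𝒫_nco(M))`: a nonempty compact subset `K` of `M` is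
contained in `co(S|M)` iff `K` is the limit, in the Hausdorff metric on nonempty compact
subsets of `M`, of a Cauchy sequence of nonempty compact subsets of `S`. -/
theorem stmt3 {M : Type*} [MetricSpace M] [CompleteSpace M] (S : Set M) (hS : S.Nonempty) :
    {K : NonemptyCompacts M | (K : Set M) ⊆ coSet S} =
      coSet {K : NonemptyCompacts M | (K : Set M) ⊆ S} := by
  rw [coSet_eq_closure, coSet_eq_closure]
  ext K
  simp only [Set.mem_setOf_eq]
  constructor
  · -- K ⊆ closure S → K ∈ closure {K | K ⊆ S}
    intro hK
    rw [Metric.mem_closure_iff]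
    intro ε hε
    have hε3 : (0:ℝ) < ε / 3 := by linarith
    obtain ⟨t, htK, htfin, htcov⟩ := K.isCompact.finite_cover_balls hε3
    -- choose a point of S near each center
    have hch : ∀ x ∈ t, ∃ y ∈ S, dist x y < ε / 3 := by
      intro x hx
      have : x ∈ closure S := hK (htK hx)
      exact Metric.mem_closure_iff.1 this _ hε3
    choose! y hyS hyd using hch
    have htne : t.Nonempty := by
      obtain ⟨x, hx⟩ := K.nonempty
      rcases Set.mem_iUnion₂.1 (htcov hx) with ⟨c, hc, -⟩
      exact ⟨c, hc⟩
    set Ls : Set M := y '' t with hLs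
    have hLsfin : Ls.Finite := htfin.image y
    have hLsne : Ls.Nonempty := htne.image y
    refine ⟨⟨⟨Ls, hLsfin.isCompact⟩, hLsne⟩, ?_, ?_⟩
    · intro z hz
      rcases hz with ⟨c, hc, rfl⟩
      exact hyS c hc
    · rw [Metric.NonemptyCompacts.dist_eq]
      have hle : Metric.hausdorffDist (K : Set M) Ls ≤ 2 * ε / 3 := by
        apply Metric.hausdorffDist_le_of_mem_dist (by linarith)
        · intro x hx
          rcases Set.mem_iUnion₂.1 (htcov hx) with ⟨c, hc, hxc⟩
          refine ⟨y c, ⟨c, hc, rfl⟩, ?_⟩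
          have h1 : dist x c < ε / 3 := Metric.mem_ball.1 hxc
          have h2 := hyd c hc
          calc dist x (y c) ≤ dist x c + dist c (y c) := dist_triangle _ _ _
            _ ≤ 2 * ε / 3 := by linarith
        · rintro z ⟨c, hc, rfl⟩
          refine ⟨c, htK hc, ?_⟩
          have := hyd c hc
          rw [dist_comm]
          linarith
      exact lt_of_le_of_lt hle (by linarith)
  · -- K ∈ closure {K | K ⊆ S} → K ⊆ closure S
    intro hK x hx
    rw [Metric.mem_closure_iff]
    intro ε hε
    rcases Metric.mem_closure_iff.1 hK ε hε with ⟨L, hLS, hd⟩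
    rw [Metric.NonemptyCompacts.dist_eq] at hd
    have hfin : EMetric.hausdorffEdist (K : Set M) (L : Set M) ≠ ⊤ :=
      Metric.hausdorffEdist_ne_top_of_nonempty_of_bounded K.nonempty L.nonempty
        K.isCompact.isBounded L.isCompact.isBounded
    rcases Metric.exists_dist_lt_of_hausdorffDist_lt hx hd hfin with ⟨z, hzL, hz⟩
    exact ⟨z, hLS hzL, hz⟩
end

section
/- Let Q_D be the unique (up to isometry) complete ultrametric space satisfying Q_D ≅ {ε} + (A × ½·Q_D) for a set A of actions with the discrete metric (i.e., Q_D is the space of finite and infinite sequences over A with the Baire-type metric d(q,q') = 2^{-n} where n is the length of the longest common prefix). Fix n̄ ∈ ℕ and τ ∈ A, and let P_D be the space of nonempty compact subsets of Q_D with the Hausdorff metric. For 0 ≤ i ≤ n̄ define p₁ ⊕ᵢ p₂ = let p̄ = { q ∈ p₁ ∪ p₂ : q = τ^{n̄−i}·q̄ for some q̄ ≠ ε } in (if p̄ = ∅ then {τ^{n̄−i}} else p̄). Then each ⊕ᵢ is a well-defined nonexpansive operator on P_D × P_D, and is associative and commutative. -/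
/-!
Write `m = n̄ - i`, `S = τ^m·(Q_D ∖ {ε})` and `c = τ^m`. Then `p₁ ⊕ᵢ p₂` is `(p₁ ∪ p₂) ∩ S`,
or `{c}` when that is empty; since `c ∉ S`, it depends only on `(p₁ ∪ p₂) ∩ S`, which gives
associativity and commutativity.

Every point outside `S` is at distance at least `2^{-m}` from `S`. Hence `S` is closed, which
gives compactness, and for `r := d_H(P, Q) < 2^{-m}` every point of `P ∩ S` is within `r` of
`Q ∩ S`, so intersecting with `S` does not increase the Hausdorff distance. If `r ≥ 2^{-m}`
there is nothing to prove: all values of `⊕ᵢ` lie in `τ^m·Q_D`, of diameter at most `2^{-m}`.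
-/

open Set Metric EMetric
open scoped Classical

section RestrictOr

variable {α : Type*} {S P Q : Set α} {c : α}

/-- `p₁ ⊕ᵢ p₂` is `restrictOr S c (p₁ ∪ p₂)` with `S = τ^{n̄-i}·(Q_D ∖ {ε})`, `c = τ^{n̄-i}`. -/
def restrictOr (S : Set α) (c : α) (P : Set α) : Set α :=
  if P ∩ S = ∅ then {c} else P ∩ S

theorem restrictOr_nonempty : (restrictOr S c P).Nonempty := by
  unfold restrictOr
  split_ifs with h
  · exact singleton_nonempty c
  · exact nonempty_iff_ne_empty.2 h

theorem restrictOr_subset_insert : restrictOr S c P ⊆ insert c S := by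
  unfold restrictOr
  split_ifs
  · exact singleton_subset_iff.2 (mem_insert c S)
  · exact inter_subset_right.trans (subset_insert c S)

theorem IsCompact.restrictOr [TopologicalSpace α] (hP : IsCompact P) (hS : IsClosed S) :
    IsCompact (restrictOr S c P) := by
  unfold _root_.restrictOr
  split_ifs
  · exact isCompact_singleton
  · exact hP.inter_right hS

theorem restrictOr_congr (h : P ∩ S = Q ∩ S) : restrictOr S c P = restrictOr S c Q := by
  simp only [restrictOr, h]

theorem restrictOr_inter (hc : c ∉ S) : restrictOr S c P ∩ S = P ∩ S := by
  unfold restrictOr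
  split_ifs with h
  · rw [h, singleton_inter_eq_empty.2 hc]
  · rw [inter_assoc, inter_self]

theorem restrictOr_restrictOr_union (hc : c ∉ S) :
    restrictOr S c (restrictOr S c P ∪ Q) = restrictOr S c (P ∪ Q) :=
  restrictOr_congr <| by
    rw [union_inter_distrib_right, restrictOr_inter hc, ← union_inter_distrib_right]

theorem restrictOr_union_restrictOr (hc : c ∉ S) :
    restrictOr S c (P ∪ restrictOr S c Q) = restrictOr S c (P ∪ Q) := by
  rw [union_comm, restrictOr_restrictOr_union hc, union_comm]

end RestrictOr

section Separated

variable {α : Type*} [PseudoEMetricSpace α] {S P Q : Set α} {c u : α} {δ : ENNReal}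

theorem isClosed_of_le_edist (hδ : 0 < δ) (hsep : ∀ x ∉ S, ∀ s ∈ S, δ ≤ edist x s) :
    IsClosed S := by
  rw [← isOpen_compl_iff, EMetric.isOpen_iff]
  refine fun x hx => ⟨δ, hδ, fun y hy hyS => (hsep x hx y hyS).not_gt ?_⟩
  rwa [mem_eball, edist_comm] at hy

theorem infEDist_inter_eq (hsep : ∀ x ∉ S, ∀ s ∈ S, δ ≤ edist x s) (hu : u ∈ S)
    (hQ : infEDist u Q < δ) : infEDist u (Q ∩ S) = infEDist u Q := by
  refine le_antisymm (le_of_forall_gt fun r hr => ?_) (infEDist_anti inter_subset_left)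
  obtain ⟨v, hvQ, hv⟩ := infEDist_lt_iff.1 (lt_min hr hQ)
  have hvS : v ∈ S := by
    by_contra hvS
    exact (hsep v hvS u hu).not_gt (by rw [edist_comm]; exact hv.trans_le (min_le_right _ _))
  exact (infEDist_le_edist_of_mem (show v ∈ Q ∩ S from ⟨hvQ, hvS⟩)).trans_lt (hv.trans_le (min_le_left _ _))

theorem infEDist_inter_le_hausdorffEDist (hsep : ∀ x ∉ S, ∀ s ∈ S, δ ≤ edist x s)
    (hPQ : hausdorffEDist P Q < δ) (hu : u ∈ P ∩ S) :
    infEDist u (Q ∩ S) ≤ hausdorffEDist P Q := by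
  have hle : infEDist u Q ≤ hausdorffEDist P Q := infEDist_le_hausdorffEDist_of_mem hu.1
  rw [infEDist_inter_eq hsep hu.2 (hle.trans_lt hPQ)]
  exact hle

theorem inter_eq_empty_of_hausdorffEDist_lt (hsep : ∀ x ∉ S, ∀ s ∈ S, δ ≤ edist x s)
    (hPQ : hausdorffEDist P Q < δ) (hQ : Q ∩ S = ∅) : P ∩ S = ∅ := by
  refine eq_empty_of_forall_notMem fun u hu => ?_
  have h := infEDist_inter_le_hausdorffEDist hsep hPQ hu
  rw [hQ, infEDist_empty, top_le_iff] at h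
  exact (h ▸ hPQ).not_ge le_top

theorem hausdorffEDist_inter_le (hsep : ∀ x ∉ S, ∀ s ∈ S, δ ≤ edist x s)
    (hPQ : hausdorffEDist P Q < δ) :
    hausdorffEDist (P ∩ S) (Q ∩ S) ≤ hausdorffEDist P Q := by
  refine hausdorffEDist_le_of_infEDist (fun u hu => ?_) (fun u hu => ?_)
  · exact infEDist_inter_le_hausdorffEDist hsep hPQ hu
  · rw [hausdorffEDist_comm] at hPQ ⊢
    exact infEDist_inter_le_hausdorffEDist hsep hPQ hu

theorem hausdorffEDist_restrictOr_le (hsep : ∀ x ∉ S, ∀ s ∈ S, δ ≤ edist x s)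
    (hdiam : ediam (insert c S) ≤ δ) :
    hausdorffEDist (restrictOr S c P) (restrictOr S c Q) ≤ hausdorffEDist P Q := by
  rcases le_or_gt δ (hausdorffEDist P Q) with hδ | hδ
  · calc hausdorffEDist (restrictOr S c P) (restrictOr S c Q)
        _ ≤ ediam (restrictOr S c P ∪ restrictOr S c Q) :=
          hausdorffEDist_le_ediam restrictOr_nonempty restrictOr_nonempty
        _ ≤ ediam (insert c S) :=
          ediam_mono (union_subset restrictOr_subset_insert restrictOr_subset_insert)
        _ ≤ hausdorffEDist P Q := hdiam.trans hδ
  · unfold restrictOr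
    by_cases hP : P ∩ S = ∅
    · have hQ : Q ∩ S = ∅ :=
        inter_eq_empty_of_hausdorffEDist_lt hsep (by rwa [hausdorffEDist_comm]) hP
      rw [if_pos hP, if_pos hQ, hausdorffEDist_self]
      exact zero_le
    · have hQ : Q ∩ S ≠ ∅ := fun hQ => hP (inter_eq_empty_of_hausdorffEDist_lt hsep hδ hQ)
      rw [if_neg hP, if_neg hQ]
      exact hausdorffEDist_inter_le hsep hδ

end Separated

theorem dist_iterate_eq_pow_mul {α : Type*} [PseudoMetricSpace α] {f : α → α} {K : ℝ}
    (hf : ∀ x y, dist (f x) (f y) = K * dist x y) (k : ℕ) (x y : α) :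
    dist (f^[k] x) (f^[k] y) = K ^ k * dist x y := by
  induction k with
  | zero => simp
  | succ k ih => rw [Function.iterate_succ_apply', Function.iterate_succ_apply', hf, ih, pow_succ,
      mul_comm _ K, mul_assoc]

structure IsSequenceMetric {A Q : Type*} [PseudoMetricSpace Q] (eps : Q) (cons : A → Q → Q) :
    Prop where
  eq_eps_or_eq_cons : ∀ q, q = eps ∨ ∃ b q', q = cons b q'
  cons_injective : ∀ b, Function.Injective (cons b)
  dist_cons_cons : ∀ b q q', dist (cons b q) (cons b q') = dist q q' / 2
  dist_cons_cons_of_ne : ∀ b b' q q', b ≠ b' → dist (cons b q) (cons b' q') = 1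
  dist_eps_cons : ∀ b q, dist eps (cons b q) = 1

namespace IsSequenceMetric

variable {A Q : Type*} [PseudoMetricSpace Q] {eps : Q} {cons : A → Q → Q}

theorem dist_eps_le_one (h : IsSequenceMetric eps cons) (q : Q) : dist eps q ≤ 1 := by
  rcases h.eq_eps_or_eq_cons q with rfl | ⟨b, q', rfl⟩
  · simp
  · exact (h.dist_eps_cons b q').le

theorem dist_le_one (h : IsSequenceMetric eps cons) (q q' : Q) : dist q q' ≤ 1 := by
  rcases h.eq_eps_or_eq_cons q with rfl | ⟨b, x, rfl⟩
  · exact h.dist_eps_le_one q'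
  rcases h.eq_eps_or_eq_cons q' with rfl | ⟨b', y, rfl⟩
  · rw [dist_comm]
    exact h.dist_eps_le_one _
  by_cases hb : b = b'
  · subst hb
    rw [h.dist_cons_cons]
    linarith [dist_triangle_left x y eps, h.dist_eps_le_one x, h.dist_eps_le_one y]
  · exact (h.dist_cons_cons_of_ne _ _ _ _ hb).le

theorem dist_iterate_cons (h : IsSequenceMetric eps cons) (b : A) (k : ℕ) (q q' : Q) :
    dist ((cons b)^[k] q) ((cons b)^[k] q') = 2⁻¹ ^ k * dist q q' :=
  dist_iterate_eq_pow_mul (fun x y => by rw [h.dist_cons_cons, div_eq_inv_mul]) k q q'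

theorem pow_le_dist_of_notMem_range (h : IsSequenceMetric eps cons) {b : A} {k : ℕ} {x : Q}
    (hx : x ∉ range (cons b)^[k]) (q : Q) : (2⁻¹ : ℝ) ^ k ≤ dist x ((cons b)^[k] q) := by
  induction k generalizing x with
  | zero => exact (hx ⟨x, rfl⟩).elim
  | succ k ih =>
    have hpow : (2⁻¹ : ℝ) ^ (k + 1) ≤ 1 := pow_le_one₀ (by norm_num) (by norm_num)
    rw [Function.iterate_succ_apply']
    rcases h.eq_eps_or_eq_cons x with rfl | ⟨b', x', rfl⟩
    · rwa [h.dist_eps_cons]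
    by_cases hb : b' = b
    · subst hb
      have hx' : x' ∉ range (cons b')^[k] := by
        rintro ⟨y, rfl⟩
        exact hx ⟨y, Function.iterate_succ_apply' _ _ _⟩
      rw [h.dist_cons_cons, pow_succ]
      linarith [ih hx']
    · rwa [h.dist_cons_cons_of_ne _ _ _ _ hb]

theorem ofReal_pow_le_edist (h : IsSequenceMetric eps cons) (b : A) (k : ℕ) :
    ∀ x ∉ (cons b)^[k] '' {eps}ᶜ, ∀ s ∈ (cons b)^[k] '' {eps}ᶜ,
      ENNReal.ofReal (2⁻¹ ^ k) ≤ edist x s := by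
  intro x hx s hs
  obtain ⟨q, hq, rfl⟩ := hs
  rw [edist_dist]
  refine ENNReal.ofReal_le_ofReal ?_
  by_cases hxr : x ∈ range (cons b)^[k]
  · obtain ⟨y, rfl⟩ := hxr
    have hy : y = eps := by_contra fun hy => hx ⟨y, hy, rfl⟩
    obtain ⟨b', q', rfl⟩ := (h.eq_eps_or_eq_cons q).resolve_left hq
    rw [h.dist_iterate_cons, hy, h.dist_eps_cons, mul_one]
  · exact h.pow_le_dist_of_notMem_range hxr q

theorem ediam_insert_image_iterate_le (h : IsSequenceMetric eps cons) (b : A) (k : ℕ) :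
    ediam (insert ((cons b)^[k] eps) ((cons b)^[k] '' {eps}ᶜ)) ≤
      ENNReal.ofReal (2⁻¹ ^ k) := by
  refine (ediam_mono (insert_subset_iff.2
    ⟨mem_range_self _, image_subset_range _ _⟩)).trans (ediam_le ?_)
  rintro _ ⟨x, rfl⟩ _ ⟨y, rfl⟩
  rw [edist_dist, h.dist_iterate_cons]
  exact ENNReal.ofReal_le_ofReal (mul_le_of_le_one_right (by positivity) (h.dist_le_one x y))

theorem iterate_eps_notMem_image (h : IsSequenceMetric eps cons) (b : A) (k : ℕ) :
    (cons b)^[k] eps ∉ (cons b)^[k] '' {eps}ᶜ :=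
  fun hc => ((h.cons_injective b).iterate k).mem_set_image.1 hc rfl

end IsSequenceMetric

theorem stmt15_general {A : Type*} (QD : Type*) [MetricSpace QD]
    (eps : QD) (cons : A → QD → QD)
    (hcases : ∀ q : QD, q = eps ∨ ∃ b q', q = cons b q')
    (hinj : ∀ b b' q q', cons b q = cons b' q' → b = b' ∧ q = q')
    (hdist_cons : ∀ b q q', dist (cons b q) (cons b q') = dist q q' / 2)
    (hdist_ne : ∀ b b' q q', b ≠ b' → dist (cons b q) (cons b' q') = 1)
    (hdist_eps : ∀ b q, dist eps (cons b q) = 1)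
    (τ : A) (nbar i : ℕ) :
    ∀ τpow : ℕ → QD → QD, (τpow = fun k q => (cons τ)^[k] q) →
    ∀ filt : Set QD → Set QD,
      (filt = fun p => {q ∈ p | ∃ qb, qb ≠ eps ∧ q = τpow (nbar - i) qb}) →
    ∀ op : Set QD → Set QD → Set QD,
      (op = fun p₁ p₂ =>
        if filt (p₁ ∪ p₂) = ∅ then {τpow (nbar - i) eps} else filt (p₁ ∪ p₂)) →
    -- well-definedness: `⊕ᵢ` maps nonempty compact sets to nonempty compact sets
    ((∀ p₁ p₂ : Set QD, p₁.Nonempty → p₂.Nonempty → IsCompact p₁ → IsCompact p₂ →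
        (op p₁ p₂).Nonempty ∧ IsCompact (op p₁ p₂)) ∧
    -- nonexpansiveness with respect to the Hausdorff metric (max metric on pairs)
    (∀ p₁ p₂ q₁ q₂ : Set QD, p₁.Nonempty → p₂.Nonempty → q₁.Nonempty → q₂.Nonempty →
        IsCompact p₁ → IsCompact p₂ → IsCompact q₁ → IsCompact q₂ →
        hausdorffEdist (op p₁ p₂) (op q₁ q₂) ≤
          max (hausdorffEdist p₁ q₁) (hausdorffEdist p₂ q₂)) ∧
    -- associativity
    (∀ p₁ p₂ p₃ : Set QD, p₁.Nonempty → p₂.Nonempty → p₃.Nonempty →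
        IsCompact p₁ → IsCompact p₂ → IsCompact p₃ →
        op (op p₁ p₂) p₃ = op p₁ (op p₂ p₃)) ∧
    -- commutativity
    (∀ p₁ p₂ : Set QD, p₁.Nonempty → p₂.Nonempty → IsCompact p₁ → IsCompact p₂ →
        op p₁ p₂ = op p₂ p₁)) := by
  intro τpow hτ filt hfilt op hop
  have hQ : IsSequenceMetric eps cons :=
    ⟨hcases, fun b q q' h => (hinj b b q q' h).2, hdist_cons, hdist_ne, hdist_eps⟩
  set S := (cons τ)^[nbar - i] '' {eps}ᶜ
  set c := (cons τ)^[nbar - i] eps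
  have hop' : ∀ p₁ p₂, op p₁ p₂ = restrictOr S c (p₁ ∪ p₂) := by
    have hfilt' : ∀ p, filt p = p ∩ S := fun p => by
      ext q
      simp [hfilt, hτ, S, eq_comm]
    intro p₁ p₂
    simp only [hop, hfilt', hτ, restrictOr, c]
  have hsep := hQ.ofReal_pow_le_edist τ (nbar - i)
  have hS : IsClosed S := isClosed_of_le_edist (by positivity) hsep
  have hc : c ∉ S := hQ.iterate_eps_notMem_image τ (nbar - i)
  refine ⟨fun p₁ p₂ _ _ h₁ h₂ => ?_, fun p₁ p₂ q₁ q₂ _ _ _ _ _ _ _ _ => ?_,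
    fun p₁ p₂ p₃ _ _ _ _ _ _ => ?_, fun p₁ p₂ _ _ _ _ => ?_⟩
  · rw [hop']
    exact ⟨restrictOr_nonempty, (h₁.union h₂).restrictOr hS⟩
  · rw [hop', hop']
    exact (hausdorffEDist_restrictOr_le hsep (hQ.ediam_insert_image_iterate_le τ _)).trans
      hausdorffEDist_union_le
  · simp only [hop', restrictOr_restrictOr_union hc, restrictOr_union_restrictOr hc, union_assoc]
  · rw [hop', hop', union_comm]

/-- `Q_D` is (characterized abstractly as) the complete space of finite and infinite
sequences over `A` with the Baire metric: there is an empty sequence `eps`, a prefixing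
operation `cons`, every element is either `eps` or a `cons`, `cons` is injective, and the
metric satisfies `d(b·q, b·q') = d(q,q')/2`, `d(b·q, b'·q') = 1` for `b ≠ b'`, and
`d(ε, b·q) = 1`.  Fixing `τ ∈ A`, `i ≤ n̄`, the operator
`p₁ ⊕ᵢ p₂ = let p̄ = {q ∈ p₁ ∪ p₂ | q = τ^{n̄-i}·q̄, q̄ ≠ ε} in
  if p̄ = ∅ then {τ^{n̄-i}} else p̄`
is a well-defined (nonempty-compact-valued), nonexpansive, associative and commutative
operator on `P_D = 𝒫_nco(Q_D)` with the Hausdorff metric. -/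
theorem stmt15 {A : Type*} (QD : Type*) [MetricSpace QD] [CompleteSpace QD]
    (eps : QD) (cons : A → QD → QD)
    (hcases : ∀ q : QD, q = eps ∨ ∃ b q', q = cons b q')
    (hinj : ∀ b b' q q', cons b q = cons b' q' → b = b' ∧ q = q')
    (hne : ∀ b q, cons b q ≠ eps)
    (hdist_cons : ∀ b q q', dist (cons b q) (cons b q') = dist q q' / 2)
    (hdist_ne : ∀ b b' q q', b ≠ b' → dist (cons b q) (cons b' q') = 1)
    (hdist_eps : ∀ b q, dist eps (cons b q) = 1)
    (τ : A) (nbar i : ℕ) (hi : i ≤ nbar) :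
    ∀ τpow : ℕ → QD → QD, (τpow = fun k q => (cons τ)^[k] q) →
    ∀ filt : Set QD → Set QD,
      (filt = fun p => {q ∈ p | ∃ qb, qb ≠ eps ∧ q = τpow (nbar - i) qb}) →
    ∀ op : Set QD → Set QD → Set QD,
      (op = fun p₁ p₂ =>
        if filt (p₁ ∪ p₂) = ∅ then {τpow (nbar - i) eps} else filt (p₁ ∪ p₂)) →
    -- well-definedness: `⊕ᵢ` maps nonempty compact sets to nonempty compact sets
    ((∀ p₁ p₂ : Set QD, p₁.Nonempty → p₂.Nonempty → IsCompact p₁ → IsCompact p₂ →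
        (op p₁ p₂).Nonempty ∧ IsCompact (op p₁ p₂)) ∧
    -- nonexpansiveness with respect to the Hausdorff metric (max metric on pairs)
    (∀ p₁ p₂ q₁ q₂ : Set QD, p₁.Nonempty → p₂.Nonempty → q₁.Nonempty → q₂.Nonempty →
        IsCompact p₁ → IsCompact p₂ → IsCompact q₁ → IsCompact q₂ →
        hausdorffEdist (op p₁ p₂) (op q₁ q₂) ≤
          max (hausdorffEdist p₁ q₁) (hausdorffEdist p₂ q₂)) ∧
    -- associativity
    (∀ p₁ p₂ p₃ : Set QD, p₁.Nonempty → p₂.Nonempty → p₃.Nonempty →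
        IsCompact p₁ → IsCompact p₂ → IsCompact p₃ →
        op (op p₁ p₂) p₃ = op p₁ (op p₂ p₃)) ∧
    -- commutativity
    (∀ p₁ p₂ : Set QD, p₁.Nonempty → p₂.Nonempty → IsCompact p₁ → IsCompact p₂ →
        op p₁ p₂ = op p₂ p₁)) :=
  stmt15_general QD eps cons hcases hinj hdist_cons hdist_ne hdist_eps τ nbar i
end

section
/- Let Q_O be the space of finite and infinite sequences over a set A of actions, where finite sequences may be terminated by a special symbol δ, and Q_D the space of finite and infinite sequences over A, both with the Baire metric d(q,q') = 2^{-(longest common prefix length)}. Fix n̄ ∈ ℕ and τ ∈ A. Then there is a unique function ξ : Q_O → Q_D satisfying ξ(ε) = ε, ξ(δ) = τ^{n̄}, and ξ(b·q) = τ^{n̄}·b·ξ(q) for all b ∈ A, q ∈ Q_O; moreover, if n̄ ≥ 1 then ξ is injective. -/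
open Filter Topology

/-- `Q_O` and `Q_D` are (characterized abstractly as) the complete spaces of finite and
infinite sequences over `A` — with, for `Q_O`, finite sequences possibly terminated by `δ` —
carrying the Baire metric (`d(b·q, b·q') = d(q,q')/2`, metrics bounded by `1`).  Then there
is a unique `ξ : Q_O → Q_D` with `ξ(ε) = ε`, `ξ(δ) = τ^n̄`, `ξ(b·q) = τ^n̄·b·ξ(q)`;
moreover if `n̄ ≥ 1` then `ξ` is injective. -/
theorem stmt16 {A : Type*}
    (QO : Type*) [MetricSpace QO]
    (QD : Type*) [MetricSpace QD] [CompleteSpace QD]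
    (epsO deltaO : QO) (consO : A → QO → QO)
    (epsD : QD) (consD : A → QD → QD)
    (hOcases : ∀ q : QO, q = epsO ∨ q = deltaO ∨ ∃ b q', q = consO b q')
    (hOinj : ∀ b b' q q', consO b q = consO b' q' → b = b' ∧ q = q')
    (hOne1 : ∀ b q, consO b q ≠ epsO) (hOne2 : ∀ b q, consO b q ≠ deltaO)
    (hOne3 : epsO ≠ deltaO)
    (hOdist_cons : ∀ b q q', dist (consO b q) (consO b q') = dist q q' / 2)
    (hObdd : ∀ q q' : QO, dist q q' ≤ 1)
    (hDcases : ∀ q : QD, q = epsD ∨ ∃ b q', q = consD b q')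
    (hDinj : ∀ b b' q q', consD b q = consD b' q' → b = b' ∧ q = q')
    (hDne : ∀ b q, consD b q ≠ epsD)
    (hDdist_cons : ∀ b q q', dist (consD b q) (consD b q') = dist q q' / 2)
    (hDbdd : ∀ q q' : QD, dist q q' ≤ 1)
    (τ : A) (nbar : ℕ) :
    ∀ τpow : ℕ → QD → QD, (τpow = fun k q => (consD τ)^[k] q) →
    ∀ Eqns : (QO → QD) → Prop,
      (Eqns = fun ξ =>
        ξ epsO = epsD ∧ ξ deltaO = τpow nbar epsD ∧
          ∀ b q, ξ (consO b q) = τpow nbar (consD b (ξ q))) →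
    (∃! ξ : QO → QD, Eqns ξ) ∧
      (1 ≤ nbar → ∀ ξ : QO → QD, Eqns ξ → Function.Injective ξ) := by
  intro τpow hτpow Eqns hEqns
  subst hτpow
  subst hEqns
  classical
  -- distance under iterated τ-prefixing
  have hτdist : ∀ (k : ℕ) (x y : QD),
      dist ((consD τ)^[k] x) ((consD τ)^[k] y) = dist x y / 2 ^ k := by
    intro k
    induction k with
    | zero => intro x y; simp
    | succ k ih =>
      intro x y
      rw [Function.iterate_succ_apply', Function.iterate_succ_apply', hDdist_cons, ih]
      ring
  have hτinj : ∀ (k : ℕ) (x y : QD), (consD τ)^[k] x = (consD τ)^[k] y → x = y := by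
    intro k x y h
    have h1 := hτdist k x y
    rw [h, dist_self] at h1
    have hp : (0:ℝ) < 2 ^ k := by positivity
    rcases div_eq_zero_iff.mp h1.symm with h2 | h2
    · exact dist_eq_zero.mp h2
    · exact absurd h2 (by positivity)
  have hτne : ∀ (k : ℕ) (b : A) (x : QD), (consD τ)^[k] (consD b x) ≠ epsD := by
    intro k
    induction k with
    | zero => intro b x; exact hDne b x
    | succ k ih =>
      intro b x
      rw [Function.iterate_succ_apply']
      exact hDne τ _
  have h2pow : ∀ k : ℕ, (1:ℝ) ≤ 2 ^ k := fun k => one_le_pow₀ (by norm_num)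
  have hhalf : Tendsto (fun n : ℕ => ((1:ℝ)/2) ^ n) atTop (𝓝 0) :=
    tendsto_pow_atTop_nhds_zero_of_lt_one (by norm_num) (by norm_num)
  -- the iteration map
  set Φ : (QO → QD) → QO → QD := fun f q =>
    if h1 : q = epsO then epsD
    else if h2 : q = deltaO then (consD τ)^[nbar] epsD
    else (consD τ)^[nbar] (consD (((hOcases q).resolve_left h1).resolve_left h2).choose
      (f ((((hOcases q).resolve_left h1).resolve_left h2).choose_spec.choose))) with hΦdef
  have hΦeps : ∀ f, Φ f epsO = epsD := by
    intro f; simp [hΦdef]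
  have hΦdelta : ∀ f, Φ f deltaO = (consD τ)^[nbar] epsD := by
    intro f; simp [hΦdef, Ne.symm hOne3]
  have hΦcons : ∀ f b q, Φ f (consO b q) = (consD τ)^[nbar] (consD b (f q)) := by
    intro f b q
    have h1 : consO b q ≠ epsO := hOne1 b q
    have h2 : consO b q ≠ deltaO := hOne2 b q
    simp only [hΦdef]
    rw [dif_neg h1, dif_neg h2]
    have key : ∀ (c : A) (p : QO), consO b q = consO c p →
        (consD τ)^[nbar] (consD c (f p)) = (consD τ)^[nbar] (consD b (f q)) := by
      intro c p hcp
      obtain ⟨hb, hq⟩ := hOinj b c q p hcp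
      rw [← hb, ← hq]
    exact key _ _ (((hOcases (consO b q)).resolve_left h1).resolve_left
      h2).choose_spec.choose_spec
  -- contraction estimate
  have hΦdist : ∀ (f g : QO → QD) (C : ℝ), 0 ≤ C → (∀ q, dist (f q) (g q) ≤ C) →
      ∀ q, dist (Φ f q) (Φ g q) ≤ C / 2 := by
    intro f g C hC h q
    rcases hOcases q with h1 | h1 | ⟨b, q', h1⟩
    · subst h1; rw [hΦeps, hΦeps, dist_self]; linarith
    · subst h1; rw [hΦdelta, hΦdelta, dist_self]; linarith
    · subst h1
      rw [hΦcons, hΦcons, hτdist, hDdist_cons]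
      calc dist (f q') (g q') / 2 / 2 ^ nbar ≤ dist (f q') (g q') / 2 :=
            div_le_self (by positivity) (h2pow nbar)
        _ ≤ C / 2 := by linarith [h q']
  -- the approximating sequence
  set seq : ℕ → QO → QD := fun n => Φ^[n] (fun _ => epsD) with hseqdef
  have hseqsucc : ∀ n, seq (n + 1) = Φ (seq n) := by
    intro n; simp only [hseqdef]; rw [Function.iterate_succ_apply']
  have hstep : ∀ n q, dist (seq (n + 1) q) (seq n q) ≤ (1/2) ^ n := by
    intro n
    induction n with
    | zero => intro q; simpa using hDbdd (seq 1 q) (seq 0 q)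
    | succ n ih =>
      intro q
      have h := hΦdist (seq (n+1)) (seq n) ((1/2)^n) (by positivity) ih q
      have e1 : seq (n+1+1) q = Φ (seq (n+1)) q := by rw [hseqsucc]
      have e2 : seq (n+1) q = Φ (seq n) q := by rw [hseqsucc]
      have e3 : ((1:ℝ)/2)^(n+1) = (1/2)^n / 2 := by ring
      rw [e1, e2, e3]
      exact h
  have hcauchy : ∀ q, CauchySeq (fun n => seq n q) := by
    intro q
    apply cauchySeq_of_le_geometric (1/2) 1 (by norm_num)
    intro n
    rw [dist_comm]
    simpa using hstep n q
  choose ξ hξ using fun q => cauchySeq_tendsto_of_complete (hcauchy q)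
  -- ξ satisfies the equations
  have hξeps : ξ epsO = epsD := by
    have hconst : ∀ n, seq n epsO = epsD := by
      intro n
      cases n with
      | zero => rfl
      | succ n => rw [hseqsucc]; exact hΦeps _
    have h1 : Tendsto (fun n => seq n epsO) atTop (𝓝 epsD) := by
      simp only [hconst]; exact tendsto_const_nhds
    exact tendsto_nhds_unique (hξ epsO) h1
  have hξdelta : ξ deltaO = (consD τ)^[nbar] epsD := by
    have hconst : ∀ n, seq (n + 1) deltaO = (consD τ)^[nbar] epsD := by
      intro n; rw [hseqsucc]; exact hΦdelta _
    have h1 : Tendsto (fun n => seq (n + 1) deltaO) atTop (𝓝 ((consD τ)^[nbar] epsD)) := by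
      simp only [hconst]; exact tendsto_const_nhds
    have h2 : Tendsto (fun n => seq (n + 1) deltaO) atTop (𝓝 (ξ deltaO)) :=
      (hξ deltaO).comp (tendsto_add_atTop_nat 1)
    exact tendsto_nhds_unique h2 h1
  have hξcons : ∀ b q, ξ (consO b q) = (consD τ)^[nbar] (consD b (ξ q)) := by
    intro b q
    have hlip : LipschitzWith 1 (fun x : QD => (consD τ)^[nbar] (consD b x)) := by
      apply LipschitzWith.of_dist_le_mul
      intro x y
      rw [hτdist, hDdist_cons]
      have hxy : (0:ℝ) ≤ dist x y := dist_nonneg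
      have h2 := h2pow nbar
      calc dist x y / 2 / 2 ^ nbar ≤ dist x y / 2 := div_le_self (by positivity) h2
        _ ≤ 1 * dist x y := by linarith
    have h1 : Tendsto (fun n => (consD τ)^[nbar] (consD b (seq n q))) atTop
        (𝓝 ((consD τ)^[nbar] (consD b (ξ q)))) :=
      (hlip.continuous.tendsto _).comp (hξ q)
    have heq : ∀ n, seq (n + 1) (consO b q) = (consD τ)^[nbar] (consD b (seq n q)) := by
      intro n; rw [hseqsucc]; exact hΦcons _ _ _
    have h2 : Tendsto (fun n => seq (n + 1) (consO b q)) atTop (𝓝 (ξ (consO b q))) :=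
      (hξ (consO b q)).comp (tendsto_add_atTop_nat 1)
    rw [← funext heq] at h1
    exact tendsto_nhds_unique h2 h1
  -- uniqueness of solutions
  have huniq : ∀ f g : QO → QD,
      (f epsO = epsD ∧ f deltaO = (consD τ)^[nbar] epsD ∧
        ∀ b q, f (consO b q) = (consD τ)^[nbar] (consD b (f q))) →
      (g epsO = epsD ∧ g deltaO = (consD τ)^[nbar] epsD ∧
        ∀ b q, g (consO b q) = (consD τ)^[nbar] (consD b (g q))) →
      f = g := by
    intro f g ⟨hf1, hf2, hf3⟩ ⟨hg1, hg2, hg3⟩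
    have key : ∀ (n : ℕ) (q : QO), dist (f q) (g q) ≤ (1/2) ^ n := by
      intro n
      induction n with
      | zero => intro q; simpa using hDbdd (f q) (g q)
      | succ n ih =>
        intro q
        rcases hOcases q with h1 | h1 | ⟨b, q', h1⟩
        · subst h1; rw [hf1, hg1, dist_self]; positivity
        · subst h1; rw [hf2, hg2, dist_self]; positivity
        · subst h1
          rw [hf3, hg3, hτdist, hDdist_cons]
          calc dist (f q') (g q') / 2 / 2 ^ nbar ≤ dist (f q') (g q') / 2 :=
                div_le_self (by positivity) (h2pow nbar)
            _ ≤ (1/2) ^ n / 2 := by linarith [ih q']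
            _ = (1/2) ^ (n + 1) := by ring
    funext q
    have hle : dist (f q) (g q) ≤ 0 :=
      ge_of_tendsto' hhalf (fun n => key n q)
    exact dist_le_zero.mp hle
  constructor
  · refine ⟨ξ, ⟨hξeps, hξdelta, hξcons⟩, ?_⟩
    intro g hg
    exact huniq g ξ hg ⟨hξeps, hξdelta, hξcons⟩
  · -- injectivity
    rintro hn ζ ⟨hz1, hz2, hz3⟩ q q' hqq
    simp only [] at hz2 hz3
    obtain ⟨m, rfl⟩ : ∃ m, nbar = m + 1 := ⟨nbar - 1, (Nat.succ_pred_eq_of_pos hn).symm⟩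
    have key : ∀ (n : ℕ) (q q' : QO), ζ q = ζ q' → dist q q' ≤ (1/2) ^ n := by
      intro n
      induction n with
      | zero => intro q q' _; simpa using hObdd q q'
      | succ n ih =>
        intro q q' h
        rcases hOcases q with h1 | h1 | ⟨b, p, h1⟩ <;> subst h1 <;>
          rcases hOcases q' with h2 | h2 | ⟨b', p', h2⟩ <;> subst h2
        · rw [dist_self]; positivity
        · rw [hz1, hz2, Function.iterate_succ_apply'] at h
          exact absurd h.symm (hDne τ _)
        · rw [hz1, hz3] at h
          exact absurd h.symm (hτne _ _ _)
        · rw [hz2, hz1, Function.iterate_succ_apply'] at h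
          exact absurd h (hDne τ _)
        · rw [dist_self]; positivity
        · rw [hz2, hz3] at h
          have := hτinj _ _ _ h
          exact absurd this.symm (hDne b' _)
        · rw [hz3, hz1] at h
          exact absurd h (hτne _ _ _)
        · rw [hz3, hz2] at h
          have := hτinj _ _ _ h
          exact absurd this (hDne b _)
        · rw [hz3, hz3] at h
          obtain ⟨hb, hp⟩ := hDinj b b' (ζ p) (ζ p') (hτinj _ _ _ h)
          subst hb
          rw [hOdist_cons]
          calc dist p p' / 2 ≤ (1/2)^n / 2 := by linarith [ih p p' hp]
            _ = (1/2) ^ (n + 1) := by ring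
    have hle : dist q q' ≤ 0 := ge_of_tendsto' hhalf (fun n => key n q q' hqq)
    exact dist_le_zero.mp hle
end
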